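/- arXiv:1404.3593 — 3 statements merged into one kernel-verified Lean document; each statement's English description precedes it below -/
import Mathlib

section
/- Let V = {v^{(1)}, …, v^{(l)}} ⊂ (ℂ*)^n be a finite set. Then there exist finitely many polynomials h_1, …, h_m, each of degree at most l and each vanishing on V, such that the intersection of the amoebas of h_1, …, h_m equals Log(V) = {Log(v^{(1)}), …, Log(v^{(l)})}. -/
open Finset

noncomputable def Log {n : ℕ} (z : Fin n → ℂ) : Fin n → ℝ :=
  fun k => Real.log ‖z k‖

/-- The amoeba of a multivariate polynomial: the image under `Log` of its zero set in `(ℂ*)^n`. -/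
noncomputable def amoebaP {n : ℕ} (p : MvPolynomial (Fin n) ℂ) : Set (Fin n → ℝ) :=
  Log '' {z | (∀ k, z k ≠ 0) ∧ MvPolynomial.eval z p = 0}

/-! Choose for every point `v i` one coordinate `f i`. The product of the affine functions
`z_{f i} - (v i)_{f i}` vanishes at every `v i`, so its amoeba contains every `Log (v i)`.
Conversely, if `x` differs from each `Log (v i)`, say in coordinate `k i`, then no `z` with
`Log z = x` lies on any of the hyperplanes `z_{k i} = (v i)_{k i}`, so `x` is missing from the
amoeba of the product taken for the choice `k`. -/

namespace MvPolynomial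

variable {R σ ι : Type*} [CommRing R] [Fintype ι]

noncomputable def coordHyperplaneProd (v : ι → σ → R) (f : ι → σ) : MvPolynomial σ R :=
  ∏ i, (X (f i) - C (v i (f i)))

theorem totalDegree_coordHyperplaneProd_le (v : ι → σ → R) (f : ι → σ) :
    (coordHyperplaneProd v f).totalDegree ≤ Fintype.card ι := by
  calc (coordHyperplaneProd v f).totalDegree
      ≤ ∑ i, (X (f i) - C (v i (f i)) : MvPolynomial σ R).totalDegree :=
        totalDegree_finsetProd _ _
    _ ≤ ∑ _i : ι, 1 := by
        gcongr with i
        exact (totalDegree_sub_C_le _ _).trans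
          ((totalDegree_monomial_le _ _).trans (by simp))
    _ = Fintype.card ι := by simp

theorem eval_coordHyperplaneProd_eq_zero_iff [IsDomain R] (v : ι → σ → R) (f : ι → σ)
    (z : σ → R) : eval z (coordHyperplaneProd v f) = 0 ↔ ∃ i, z (f i) = v i (f i) := by
  simp [coordHyperplaneProd, Finset.prod_eq_zero_iff, sub_eq_zero]

theorem eval_coordHyperplaneProd_self (v : ι → σ → R) (f : ι → σ) (i : ι) :
    eval (v i) (coordHyperplaneProd v f) = 0 := by
  rw [coordHyperplaneProd, eval_prod]
  exact Finset.prod_eq_zero (mem_univ i) (by simp)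

end MvPolynomial

open MvPolynomial

theorem Log_mem_amoebaP {n : ℕ} {p : MvPolynomial (Fin n) ℂ} {z : Fin n → ℂ}
    (hz : ∀ k, z k ≠ 0) (hp : eval z p = 0) : Log z ∈ amoebaP p :=
  ⟨z, ⟨hz, hp⟩, rfl⟩

theorem iInter_amoebaP_coordHyperplaneProd {ι : Type*} [Fintype ι] {n : ℕ} (v : ι → Fin n → ℂ)
    (hv : ∀ i k, v i k ≠ 0) :
    ⋂ f, amoebaP (coordHyperplaneProd v f) = Set.range (fun i => Log (v i)) := by
  ext x
  simp only [Set.mem_iInter]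
  constructor
  · intro hx
    by_contra hxv
    have hdiff : ∀ i, ∃ k, Log (v i) k ≠ x k := fun i =>
      Function.ne_iff.1 fun h => hxv ⟨i, h⟩
    choose k hk using hdiff
    obtain ⟨z, ⟨-, hz⟩, rfl⟩ := hx k
    obtain ⟨i, hi⟩ := (eval_coordHyperplaneProd_eq_zero_iff v k z).1 hz
    exact hk i (by simp only [Log, hi])
  · rintro ⟨i, rfl⟩ f
    exact Log_mem_amoebaP (hv i) (eval_coordHyperplaneProd_self v f i)

theorem finite_amoeba_basis {n l : ℕ} (v : Fin l → Fin n → ℂ)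
    (hv : ∀ i k, v i k ≠ 0) :
    ∃ (m : ℕ) (h : Fin m → MvPolynomial (Fin n) ℂ),
      (∀ s, (h s).totalDegree ≤ l) ∧
      (∀ s i, MvPolynomial.eval (v i) (h s) = 0) ∧
      (⋂ s, amoebaP (h s)) = Set.range (fun i => Log (v i)) := by
  let e := Fintype.equivFin (Fin l → Fin n)
  refine ⟨_, fun s => coordHyperplaneProd v (e.symm s), fun s => ?_, fun s i => ?_, ?_⟩
  · simpa using totalDegree_coordHyperplaneProd_le v (e.symm s)
  · exact eval_coordHyperplaneProd_self v _ i
  · rw [e.symm.surjective.iInter_comp (fun f => amoebaP (coordHyperplaneProd v f))]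
    exact iInter_amoebaP_coordHyperplaneProd v hv
end

section
/- Let V = {v^{(1)}, …, v^{(l)}} ⊂ (ℂ*)^n be a finite set with l ≥ 1. Then there exist at most (n+1)(n^{l−1}+1) polynomials, each of degree at most l, whose amoebas intersect exactly in Log(V). -/
open Finset

/-!
Every point `v i` lies on each coordinate hyperplane `z_k = v i k` through it. For a choice
`e : ι → σ` of one coordinate per point, the product `∏ i, (X (e i) - v i (e i))` vanishes at every
`v i`, so `Log (v i)` lies in all these amoebas. Conversely, if `x` is not any `Log (v i)`, choose
for each `i` a coordinate `e i` at which `x` and `Log (v i)` differ: a zero `z` of the corresponding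
product with `Log z = x` would have `z (e i) = v i (e i)` for some `i`, hence
`x (e i) = Log (v i) (e i)`, a contradiction. These are `n ^ l` polynomials of degree at most `l`.
-/

theorem exists_eq_of_forall_choice_exists_apply_eq {ι σ α : Type*} {x : σ → α} {y : ι → σ → α}
    (h : ∀ e : ι → σ, ∃ i, x (e i) = y i (e i)) : ∃ i, y i = x := by
  by_contra! hne
  choose e he using fun i => Function.ne_iff.mp (hne i)
  obtain ⟨i, hi⟩ := h e
  exact he i hi.symm

theorem Nat.pow_le_succ_mul_pow_sub_one_add_one (n l : ℕ) :
    n ^ l ≤ (n + 1) * (n ^ (l - 1) + 1) := by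
  rcases l with _ | l
  · simp
    omega
  · calc n ^ (l + 1) = n * n ^ l := by ring
      _ ≤ (n + 1) * (n ^ l + 1) := Nat.mul_le_mul (Nat.le_succ n) (Nat.le_succ _)

namespace MvPolynomial

variable {ι σ R : Type*} [Fintype ι]

noncomputable def transversalProd [CommRing R] (v : ι → σ → R) (e : ι → σ) :
    MvPolynomial σ R :=
  ∏ i, (X (e i) - C (v i (e i)))

theorem totalDegree_transversalProd_le [CommRing R] (v : ι → σ → R) (e : ι → σ) :
    (transversalProd v e).totalDegree ≤ Fintype.card ι := by
  have hX (s : σ) : (X s : MvPolynomial σ R).totalDegree ≤ 1 :=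
    (totalDegree_monomial_le _ _).trans_eq (by simp)
  calc (transversalProd v e).totalDegree
      ≤ ∑ i, (X (e i) - C (v i (e i)) : MvPolynomial σ R).totalDegree :=
        totalDegree_finsetProd _ _
    _ ≤ ∑ _i : ι, 1 := sum_le_sum fun i _ => (totalDegree_sub_C_le _ _).trans (hX _)
    _ = Fintype.card ι := by simp

theorem eval_transversalProd_eq_zero_iff [CommRing R] [IsDomain R] {v : ι → σ → R}
    {e : ι → σ} {z : σ → R} : eval z (transversalProd v e) = 0 ↔ ∃ i, z (e i) = v i (e i) := by
  simp [transversalProd, prod_eq_zero_iff, sub_eq_zero]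

end MvPolynomial

open MvPolynomial

variable {n : ℕ} {ι : Type*} [Fintype ι] {v : ι → Fin n → ℂ}

theorem Log_mem_amoebaP_transversalProd {i : ι} (hv : ∀ k, v i k ≠ 0) (e : ι → Fin n) :
    Log (v i) ∈ amoebaP (transversalProd v e) :=
  ⟨v i, ⟨hv, eval_transversalProd_eq_zero_iff.mpr ⟨i, rfl⟩⟩, rfl⟩

theorem exists_apply_eq_of_mem_amoebaP_transversalProd {e : ι → Fin n} {x : Fin n → ℝ}
    (hx : x ∈ amoebaP (transversalProd v e)) : ∃ i, x (e i) = Log (v i) (e i) := by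
  obtain ⟨z, ⟨-, hz⟩, rfl⟩ := hx
  obtain ⟨i, hi⟩ := eval_transversalProd_eq_zero_iff.mp hz
  exact ⟨i, by simp [Log, hi]⟩

theorem iInter_amoebaP_transversalProd (hv : ∀ i k, v i k ≠ 0) :
    ⋂ e : ι → Fin n, amoebaP (transversalProd v e) = Set.range fun i => Log (v i) := by
  ext x
  simp only [Set.mem_iInter, Set.mem_range]
  constructor
  · exact fun hx => exists_eq_of_forall_choice_exists_apply_eq fun e =>
      exists_apply_eq_of_mem_amoebaP_transversalProd (hx e)
  · rintro ⟨i, rfl⟩ e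
    exact Log_mem_amoebaP_transversalProd (hv i) e

theorem finite_amoeba_basis_bound_general {n l : ℕ} (v : Fin l → Fin n → ℂ)
    (hv : ∀ i k, v i k ≠ 0) :
    ∃ (m : ℕ) (h : Fin m → MvPolynomial (Fin n) ℂ),
      m ≤ (n + 1) * (n ^ (l - 1) + 1) ∧
      (∀ s, (h s).totalDegree ≤ l) ∧
      (⋂ s, amoebaP (h s)) = Set.range (fun i => Log (v i)) := by
  let E := Fintype.equivFin (Fin l → Fin n)
  refine ⟨_, fun s => transversalProd v (E.symm s), ?_, fun s => ?_, ?_⟩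
  · simpa using Nat.pow_le_succ_mul_pow_sub_one_add_one n l
  · simpa using totalDegree_transversalProd_le v (E.symm s)
  · rw [E.symm.surjective.iInter_comp fun e => amoebaP (transversalProd v e)]
    exact iInter_amoebaP_transversalProd hv

theorem finite_amoeba_basis_bound {n l : ℕ} (hl : 1 ≤ l) (v : Fin l → Fin n → ℂ)
    (hv : ∀ i k, v i k ≠ 0) :
    ∃ (m : ℕ) (h : Fin m → MvPolynomial (Fin n) ℂ),
      m ≤ (n + 1) * (n ^ (l - 1) + 1) ∧
      (∀ s, (h s).totalDegree ≤ l) ∧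
      (⋂ s, amoebaP (h s)) = Set.range (fun i => Log (v i)) :=
  finite_amoeba_basis_bound_general v hv
end

section
/- Let w ∈ ℝ^n and let V = {v^{(1)},…,v^{(l)}} ⊂ (ℂ*)^n with associated affine polynomials g_j^{(i)} (0 ≤ j ≤ n, 1 ≤ i ≤ l). If w ∉ Log(V), then for every i ∈ {1,…,l} there exists j ∈ {0,1,…,n} such that w is not in the amoeba of g_j^{(i)}. -/
open Finset

/-- The amoeba of a polynomial function on the complex torus:
the image under `Log` of its zero set in `(ℂ*)^n`. -/
noncomputable def amoeba {n : ℕ} (f : (Fin n → ℂ) → ℂ) : Set (Fin n → ℝ) :=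
  Log '' {z | (∀ k, z k ≠ 0) ∧ f z = 0}

/-- `‖v‖₀ = ∑ₖ |vₖ|`. -/
noncomputable def norm0 {n : ℕ} (v : Fin n → ℂ) : ℝ := ∑ k, ‖v k‖

/-- `g₀(z) = 1 - (1/‖v‖₀) ∑ₖ (|vₖ|/vₖ) zₖ`, the polynomial of Nisse's construction. -/
noncomputable def gzero {n : ℕ} (v : Fin n → ℂ) : (Fin n → ℂ) → ℂ :=
  fun z => 1 - (1 / (norm0 v : ℂ)) * ∑ k, ((‖v k‖ : ℂ) / v k) * z k

/-- `gⱼ(z) = 1 - ((1+‖v‖₀-|vⱼ|)/vⱼ) zⱼ + ∑_{k≠j} (|vₖ|/vₖ) zₖ`, for `1 ≤ j ≤ n`. -/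
noncomputable def gj {n : ℕ} (v : Fin n → ℂ) (j : Fin n) : (Fin n → ℂ) → ℂ :=
  fun z => 1 - (((1 + norm0 v - ‖v j‖ : ℝ) : ℂ) / v j) * z j
    + ∑ k ∈ Finset.univ.erase j, ((‖v k‖ : ℂ) / v k) * z k

/-- The family `g₀, g₁, …, gₙ` of the `n+1` affine polynomials associated to `v`. -/
noncomputable def gfam {n : ℕ} (v : Fin n → ℂ) : Fin (n + 1) → (Fin n → ℂ) → ℂ :=
  Fin.cases (gzero v) (gj v)

/-!
If `w` lies in the amoebas of `g₀, …, gₙ` for `v`, pick zeros `z` with `|zₖ| = rₖ := exp wₖ` and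
write `aₖ = |vₖ|`, `S = ∑ aₖ`, `R = ∑ rₖ`. The zero of `g₀` gives `S ≤ R` by the triangle inequality,
and the zero of `gⱼ` gives `(1 + S) rⱼ ≤ aⱼ (1 + R)`. Summing the latter over `j` yields `R ≤ S`,
so all these inequalities are equalities and `r = a`, i.e. `w = Log v`.
-/

lemma norm_eq_exp_of_Log_eq {n : ℕ} {z : Fin n → ℂ} {w : Fin n → ℝ} (hz : ∀ k, z k ≠ 0)
    (hzw : Log z = w) (k : Fin n) : ‖z k‖ = Real.exp (w k) := by
  rw [← hzw, Log, Real.exp_log (norm_pos_iff.mpr (hz k))]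

lemma norm_unit_div_mul {c : ℂ} (hc : c ≠ 0) (x : ℂ) : ‖((‖c‖ : ℂ) / c) * x‖ = ‖x‖ := by
  rw [norm_mul, norm_div, Complex.norm_real, norm_norm, div_self (norm_ne_zero_iff.mpr hc), one_mul]

lemma norm0_le_of_gzero_eq_zero {n : ℕ} {v z : Fin n → ℂ} (hv : ∀ k, v k ≠ 0)
    (hz : gzero v z = 0) : norm0 v ≤ ∑ k, ‖z k‖ := by
  unfold gzero at hz
  have hsum : (1 / (norm0 v : ℂ)) * ∑ k, ((‖v k‖ : ℂ) / v k) * z k = 1 := by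
    linear_combination -hz
  have hne : (norm0 v : ℂ) ≠ 0 := by
    intro h0
    simp [h0] at hsum
  have hsum' : ∑ k, ((‖v k‖ : ℂ) / v k) * z k = norm0 v := by
    field_simp at hsum
    simpa only [div_mul_eq_mul_div] using hsum
  calc norm0 v = ‖∑ k, ((‖v k‖ : ℂ) / v k) * z k‖ := by
        rw [hsum', Complex.norm_real, Real.norm_of_nonneg (by unfold norm0; positivity)]
    _ ≤ ∑ k, ‖((‖v k‖ : ℂ) / v k) * z k‖ := norm_sum_le _ _
    _ = ∑ k, ‖z k‖ := by simp only [norm_unit_div_mul (hv _)]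

lemma one_add_norm0_mul_le_of_gj_eq_zero {n : ℕ} {v z : Fin n → ℂ} (hv : ∀ k, v k ≠ 0)
    {j : Fin n} (hz : gj v j z = 0) :
    (1 + norm0 v) * ‖z j‖ ≤ ‖v j‖ * (1 + ∑ k, ‖z k‖) := by
  unfold gj at hz
  have hvj : 0 < ‖v j‖ := norm_pos_iff.mpr (hv j)
  have hle : ‖v j‖ ≤ norm0 v := single_le_sum (fun k _ => norm_nonneg (v k)) (mem_univ j)
  have hzj : (((1 + norm0 v - ‖v j‖ : ℝ) : ℂ) / v j) * z j
      = 1 + ∑ k ∈ univ.erase j, ((‖v k‖ : ℂ) / v k) * z k := by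
    linear_combination -hz
  have hlhs : ‖(((1 + norm0 v - ‖v j‖ : ℝ) : ℂ) / v j) * z j‖
      = (1 + norm0 v - ‖v j‖) / ‖v j‖ * ‖z j‖ := by
    rw [norm_mul, norm_div, Complex.norm_real, Real.norm_of_nonneg (by linarith)]
  have hrhs : ‖1 + ∑ k ∈ univ.erase j, ((‖v k‖ : ℂ) / v k) * z k‖
      ≤ 1 + (∑ k, ‖z k‖ - ‖z j‖) := by
    calc _ ≤ ‖(1 : ℂ)‖ + ‖∑ k ∈ univ.erase j, ((‖v k‖ : ℂ) / v k) * z k‖ := norm_add_le _ _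
      _ ≤ 1 + ∑ k ∈ univ.erase j, ‖((‖v k‖ : ℂ) / v k) * z k‖ := by
          rw [norm_one]; exact add_le_add_right (norm_sum_le _ _) 1
      _ = 1 + (∑ k, ‖z k‖ - ‖z j‖) := by
          simp only [norm_unit_div_mul (hv _), sum_erase_eq_sub (mem_univ j)]
  have h : (1 + norm0 v - ‖v j‖) / ‖v j‖ * ‖z j‖ ≤ 1 + (∑ k, ‖z k‖ - ‖z j‖) := by
    rw [← hlhs, hzj]; exact hrhs
  rw [div_mul_eq_mul_div, div_le_iff₀ hvj] at h
  linarith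

lemma eq_of_sum_le_of_one_add_sum_mul_le {ι : Type*} [Fintype ι] {a r : ι → ℝ}
    (ha : ∀ j, 0 ≤ a j) (hsum : ∑ j, a j ≤ ∑ j, r j)
    (h : ∀ j, (1 + ∑ k, a k) * r j ≤ a j * (1 + ∑ k, r k)) : r = a := by
  set S := ∑ k, a k
  set R := ∑ k, r k
  have hS : 0 ≤ S := sum_nonneg fun k _ => ha k
  have hRS : R ≤ S := by
    have := sum_le_sum fun j (_ : j ∈ univ) => h j
    rw [← mul_sum, ← sum_mul] at this
    linarith
  have hR : R = S := le_antisymm hRS hsum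
  have hle : ∀ j ∈ univ, r j ≤ a j := fun j _ =>
    le_of_mul_le_mul_left (by simpa only [hR, mul_comm (a j)] using h j) (by linarith)
  funext j
  exact (sum_eq_sum_iff_of_le hle).mp hR j (mem_univ j)

lemma Log_eq_of_forall_mem_amoeba_gfam {n : ℕ} {v : Fin n → ℂ} (hv : ∀ k, v k ≠ 0)
    {w : Fin n → ℝ} (h : ∀ j, w ∈ amoeba (gfam v j)) : Log v = w := by
  have hr : ∀ {z : Fin n → ℂ}, (∀ k, z k ≠ 0) → Log z = w →
      ∑ k, ‖z k‖ = ∑ k, Real.exp (w k) := fun hz hzw =>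
    sum_congr rfl fun k _ => norm_eq_exp_of_Log_eq hz hzw k
  have hsum : ∑ k, ‖v k‖ ≤ ∑ k, Real.exp (w k) := by
    obtain ⟨z, ⟨hz, hgz⟩, hzw⟩ := h 0
    exact hr hz hzw ▸ norm0_le_of_gzero_eq_zero hv hgz
  have hj : ∀ j, (1 + ∑ k, ‖v k‖) * Real.exp (w j) ≤ ‖v j‖ * (1 + ∑ k, Real.exp (w k)) := by
    intro j
    obtain ⟨z, ⟨hz, hgz⟩, hzw⟩ := h j.succ
    rw [← hr hz hzw, ← norm_eq_exp_of_Log_eq hz hzw j]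
    exact one_add_norm0_mul_le_of_gj_eq_zero hv hgz
  have hra := eq_of_sum_le_of_one_add_sum_mul_le (fun k => norm_nonneg (v k)) hsum hj
  funext k
  rw [Log, ← congrFun hra k, Real.log_exp]

theorem lemmaA {n l : ℕ} (v : Fin l → Fin n → ℂ) (hv : ∀ i k, v i k ≠ 0)
    (w : Fin n → ℝ) (hw : w ∉ Set.range (fun i => Log (v i))) :
    ∀ i : Fin l, ∃ j : Fin (n + 1), w ∉ amoeba (gfam (v i) j) := by
  intro i
  by_contra! h
  exact hw ⟨i, Log_eq_of_forall_mem_amoeba_gfam (hv i) h⟩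
end
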